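/- arXiv:2107.03051 — 3 statements merged into one kernel-verified Lean document; each statement's English description precedes it below -/
import Mathlib

section
/- Let G be a group, T : ℤ → G a family of elements, and c ∈ G an element such that T(a) · T(a+1) = c for every a ∈ ℤ. Then for all a, b ∈ ℤ there exist n ∈ ℕ, integers a₁, …, a_n, signs ε₁, …, ε_n ∈ {1, −1}, and an integer m such that T(a) · T(b) = c^m · T(a_n)^{2ε_n} · ⋯ · T(a₁)^{2ε₁}. In particular, T(a) · T(b) lies in the subgroup of G generated by c together with the squares { T(x)² : x ∈ ℤ }. -/
/-!
From `T x * T (x + 1) = c` one gets `c * T x * c⁻¹ = T (x - 2)`, so `c` normalizes the subgroup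
generated by the squares `T x ^ 2`, and every element of the subgroup generated by `c` and these
squares is a power of `c` times a word in the squares and their inverses. That `T a * T b` lies in
this subgroup follows by induction on `b`, starting from `T a * T a = T a ^ 2`, since
`T (k + 1) = T k * (T k ^ 2)⁻¹ * c` and `T (k - 1) = T k * c⁻¹ * T (k - 1) ^ 2`.
-/

open Subgroup

namespace ConsecutiveProduct

variable {G : Type*} [Group G] {T : ℤ → G} {c : G}

theorem exists_zpow_mul_of_mem_closure_union {S : Set G} (hc : c ∈ normalizer S) {g : G}
    (hg : g ∈ closure ({c} ∪ S)) : ∃ m : ℤ, ∃ s ∈ closure S, g = c ^ m * s := by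
  have hle : zpowers c ≤ normalizer (closure S : Set G) :=
    zpowers_le.mpr (normalizer_le_normalizer_closure S hc)
  rw [Subgroup.closure_union, ← zpowers_eq_closure, ← SetLike.mem_coe,
    coe_mul_of_left_le_normalizer_right _ _ hle] at hg
  obtain ⟨_, ⟨m, rfl⟩, s, hs, rfl⟩ := hg
  exact ⟨m, s, hs, rfl⟩

def squares (T : ℤ → G) : Set G := {g | ∃ x : ℤ, g = T x ^ 2}

theorem exists_signed_squares_of_mem_closure_squares {s : G} (hs : s ∈ closure (squares T)) :
    ∃ (n : ℕ) (as : Fin n → ℤ) (ε : Fin n → ℤ),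
      (∀ i, ε i = 1 ∨ ε i = -1) ∧ s = (List.ofFn fun i : Fin n => T (as i) ^ (2 * ε i)).prod := by
  rw [← mem_toSubmonoid, closure_toSubmonoid] at hs
  obtain ⟨l, hl, rfl⟩ := Submonoid.exists_list_of_mem_closure hs
  have hsigned : ∀ y ∈ l, ∃ x e : ℤ, (e = 1 ∨ e = -1) ∧ y = T x ^ (2 * e) := by
    intro y hy
    rcases hl y hy with ⟨x, rfl⟩ | ⟨x, hx⟩
    · exact ⟨x, 1, Or.inl rfl, by simp⟩
    · exact ⟨x, -1, Or.inr rfl, by rw [← inv_inv y, hx]; simp⟩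
  choose as ε hε heq using fun i : Fin l.length => hsigned l[i] (List.getElem_mem _)
  refine ⟨l.length, as, ε, hε, ?_⟩
  conv_lhs => rw [← List.ofFn_getElem (xs := l)]
  exact congrArg (fun f => (List.ofFn f).prod) (funext heq)

theorem succ_eq_inv_mul (h : ∀ x, T x * T (x + 1) = c) (x : ℤ) : T (x + 1) = (T x)⁻¹ * c := by
  rw [← h x, inv_mul_cancel_left]

theorem mul_mul_inv_eq_sub_two (h : ∀ x, T x * T (x + 1) = c) (x : ℤ) :
    c * T x * c⁻¹ = T (x - 2) := by
  have h₁ : T (x - 2) * T (x - 1) = c := by simpa [sub_add] using h (x - 2)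
  have h₂ : T (x - 1) * T x = c := by simpa using h (x - 1)
  calc c * T x * c⁻¹ = T (x - 2) * T (x - 1) * T x * (T (x - 1) * T x)⁻¹ := by rw [h₁, h₂]
    _ = T (x - 2) := by group

theorem mem_normalizer_squares (h : ∀ x, T x * T (x + 1) = c) : c ∈ normalizer (squares T) := by
  refine mem_set_normalizer_iff.mpr fun g => ⟨?_, ?_⟩
  · rintro ⟨x, rfl⟩
    exact ⟨x - 2, by rw [← conj_pow, mul_mul_inv_eq_sub_two h]⟩
  · rintro ⟨x, hx⟩
    have hconj : c * T (x + 2) ^ 2 * c⁻¹ = T x ^ 2 := by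
      rw [← conj_pow, mul_mul_inv_eq_sub_two h, add_sub_cancel_right]
    exact ⟨x + 2, mul_left_cancel (mul_right_cancel (hx.trans hconj.symm))⟩

theorem mul_mem_closure (h : ∀ x, T x * T (x + 1) = c) (a b : ℤ) :
    T a * T b ∈ closure ({c} ∪ squares T) := by
  have hc : c ∈ closure ({c} ∪ squares T) := subset_closure (Or.inl rfl)
  have hsq : ∀ x, T x ^ 2 ∈ closure ({c} ∪ squares T) := fun x => subset_closure (Or.inr ⟨x, rfl⟩)
  induction b using Int.inductionOn' with
  | b => exact a
  | zero => simpa [sq] using hsq a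
  | succ k _ ih =>
    have : T a * T (k + 1) = T a * T k * (T k ^ 2)⁻¹ * c := by rw [succ_eq_inv_mul h]; group
    rw [this]
    exact mul_mem (mul_mem ih (inv_mem (hsq k))) hc
  | pred k _ ih =>
    have : T a * T (k - 1) = T a * T k * c⁻¹ * T (k - 1) ^ 2 := by
      rw [← h (k - 1), sub_add_cancel]; group
    rw [this]
    exact mul_mem (mul_mem ih (inv_mem hc)) (hsq _)

end ConsecutiveProduct

open ConsecutiveProduct in
/-- Abstract form of Proposition 2.12: assuming the relation `T a * T (a+1) = c` for all
`a : ℤ`, any product `T a * T b` can be written as `c ^ m` times a product of squares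
`T aᵢ ^ (±2)`; in particular it lies in the subgroup generated by `c` and the squares
`T x ^ 2`. -/
theorem stmt_1 {G : Type*} [Group G] (T : ℤ → G) (c : G)
    (h : ∀ x : ℤ, T x * T (x + 1) = c) (a b : ℤ) :
    (∃ (n : ℕ) (as : Fin n → ℤ) (ε : Fin n → ℤ) (m : ℤ),
      (∀ i, ε i = 1 ∨ ε i = -1) ∧
      T a * T b = c ^ m * (List.ofFn fun i : Fin n => T (as i) ^ (2 * ε i)).prod) ∧
    T a * T b ∈ Subgroup.closure ({c} ∪ { g : G | ∃ x : ℤ, g = T x ^ 2 }) := by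
  have hmem : T a * T b ∈ closure ({c} ∪ squares T) := mul_mem_closure h a b
  obtain ⟨m, s, hs, hprod⟩ := exists_zpow_mul_of_mem_closure_union (mem_normalizer_squares h) hmem
  obtain ⟨n, as, ε, hε, rfl⟩ := exists_signed_squares_of_mem_closure_squares hs
  exact ⟨⟨n, as, ε, m, hε, hprod⟩, hmem⟩
end

section
/- Let G be a group, T : ℤ → G a family of elements, and c ∈ G an element such that T(a) · T(a+1) = c for every a ∈ ℤ. Then for every a ∈ ℤ, the subgroup of G generated by the set { T(x) : x ∈ ℤ } is equal to the subgroup generated by the two elements T(a) and T(a+1). -/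
/-- Abstract form of Theorem 2.14: assuming the relation `T a * T (a+1) = c` for all
`a : ℤ`, the subgroup generated by all the `T x` is generated by any two consecutive
elements `T a`, `T (a+1)`. -/
theorem stmt_2 {G : Type*} [Group G] (T : ℤ → G) (c : G)
    (h : ∀ x : ℤ, T x * T (x + 1) = c) (a : ℤ) :
    Subgroup.closure (Set.range T) = Subgroup.closure {T a, T (a + 1)} := by
  apply le_antisymm
  · rw [Subgroup.closure_le]
    rintro _ ⟨x, rfl⟩
    set H := Subgroup.closure ({T a, T (a + 1)} : Set G)
    have ha : T a ∈ H := Subgroup.subset_closure (Set.mem_insert _ _)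
    have ha1 : T (a + 1) ∈ H :=
      Subgroup.subset_closure (Set.mem_insert_of_mem _ rfl)
    have hc : c ∈ H := (h a) ▸ H.mul_mem ha ha1
    refine Int.inductionOn' x a ha ?_ ?_
    · intro k _ ih
      have e : T (k + 1) = (T k)⁻¹ * c := by
        rw [← h k]; group
      rw [e]; exact H.mul_mem (H.inv_mem ih) hc
    · intro k _ ih
      have e : T (k - 1) = c * (T k)⁻¹ := by
        have hk := h (k - 1)
        rw [sub_add_cancel] at hk
        rw [← hk]; group
      rw [e]; exact H.mul_mem hc (H.inv_mem ih)
  · rw [Subgroup.closure_le]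
    rintro x (rfl | rfl) <;> exact Subgroup.subset_closure (Set.mem_range_self _)
end

section
/- Let G be a group, T : ℤ → G a family of elements, and c ∈ G an element such that T(a) · T(a+1) = c for every a ∈ ℤ. Fix a₀ ∈ ℤ. Then every element g of the subgroup of G generated by { T(x) : x ∈ ℤ } can be written either in the form g = c^m · s or in the form g = c^m · T(a₀) · s, where m ∈ ℤ and s belongs to the subgroup of G generated by the squares { T(x)² : x ∈ ℤ }. -/
/-!
From `T a * T (a + 1) = c` one gets `T (a + 1) = (T a)⁻¹ * c` and `c * T (y + 2) * c⁻¹ = T y`.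
Hence conjugating `T y ^ 2` by `T (a + 1)` amounts, up to conjugation by the square `T a ^ 2`,
to conjugating `T (y - 2) ^ 2` by `T a`; induction on `y - a` shows that every `T a` normalizes
the subgroup `S` generated by the squares. In the quotient of the normalizer of `S` by `S`, the
images `t x` of the `T x` are involutions with `t x * t (x + 1) = c`, so `t x * c = c⁻¹ * t x`
and every `t x` is `c ^ m * t a₀`: the group they generate is dihedral, with elements `c ^ m` and
`c ^ m * t a₀`. Lifting back to `G` gives the normal form.
-/

open Subgroup

section Dihedral

variable {Q : Type*} [Group Q] {t : ℤ → Q} {r : Q}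

theorem inv_eq_self_of_sq_eq_one {q : Q} (hq : q ^ 2 = 1) : q⁻¹ = q :=
  inv_eq_of_mul_eq_one_right (by rw [← pow_two, hq])

theorem apply_add_one_eq_inv_mul (ht : ∀ x, t x ^ 2 = 1) (hr : ∀ x, t x * t (x + 1) = r)
    (x : ℤ) : t (x + 1) = r⁻¹ * t x := by
  rw [← hr x, mul_inv_rev, inv_mul_cancel_right, inv_eq_self_of_sq_eq_one (ht _)]

theorem apply_eq_zpow_mul (ht : ∀ x, t x ^ 2 = 1) (hr : ∀ x, t x * t (x + 1) = r)
    (a b : ℤ) : t b = r ^ (a - b) * t a := by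
  obtain ⟨n, rfl⟩ : ∃ n, b = a + n := ⟨b - a, by ring⟩
  induction n using Int.induction_on with
  | zero => simp
  | succ n ih => rw [← add_assoc, apply_add_one_eq_inv_mul ht hr, ih]; group
  | pred n ih =>
    have h := apply_add_one_eq_inv_mul ht hr (a + (-n - 1))
    rw [show a + (-n - 1) + 1 = a + -n by ring, ih] at h
    calc t (a + (-n - 1)) = r * (r⁻¹ * t (a + (-n - 1))) := by group
      _ = r ^ (a - (a + (-(n : ℤ) - 1))) * t a := by rw [← h]; group

theorem mul_zpow_eq_zpow_neg_mul (ht : ∀ x, t x ^ 2 = 1) (hr : ∀ x, t x * t (x + 1) = r)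
    (a m : ℤ) : t a * r ^ m = r ^ (-m) * t a := by
  have h : SemiconjBy (t a) r r⁻¹ := by
    rw [SemiconjBy, ← apply_add_one_eq_inv_mul ht hr, ← hr, ← mul_assoc, ← pow_two, ht, one_mul]
  simpa [SemiconjBy] using h.zpow_right m

theorem exists_eq_zpow_of_mem_closure_range (ht : ∀ x, t x ^ 2 = 1)
    (hr : ∀ x, t x * t (x + 1) = r) (a₀ : ℤ) {q : Q} (hq : q ∈ closure (Set.range t)) :
    ∃ m : ℤ, q = r ^ m ∨ q = r ^ m * t a₀ := by
  have hmul (x m : ℤ) : t x * r ^ m = r ^ (a₀ - x - m) * t a₀ := by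
    rw [apply_eq_zpow_mul ht hr a₀ x, mul_assoc, mul_zpow_eq_zpow_neg_mul ht hr, ← mul_assoc,
      ← zpow_add, sub_eq_add_neg (a₀ - x)]
  have hmul' (x m : ℤ) : t x * (r ^ m * t a₀) = r ^ (a₀ - x - m) := by
    rw [← mul_assoc, hmul, mul_assoc, ← pow_two, ht, mul_one]
  induction hq using closure_induction_left with
  | one => exact ⟨0, .inl (zpow_zero r).symm⟩
  | mul_left _ hx y _ ih =>
    obtain ⟨x, rfl⟩ := hx
    obtain ⟨m, rfl | rfl⟩ := ih
    exacts [⟨_, .inr (hmul x m)⟩, ⟨_, .inl (hmul' x m)⟩]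
  | inv_mul_cancel _ hx y _ ih =>
    obtain ⟨x, rfl⟩ := hx
    rw [inv_eq_self_of_sq_eq_one (ht x)]
    obtain ⟨m, rfl | rfl⟩ := ih
    exacts [⟨_, .inr (hmul x m)⟩, ⟨_, .inl (hmul' x m)⟩]

end Dihedral

theorem QuotientGroup.exists_mem_eq_mul_of_mk_eq {G : Type*} [Group G] {S K : Subgroup G}
    {x y : K} (hxy : (x : K ⧸ S.subgroupOf K) = y) : ∃ s ∈ S, (y : G) = x * s :=
  ⟨(x⁻¹ * y : K), (QuotientGroup.eq (s := S.subgroupOf K)).1 hxy, by simp⟩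

theorem Subgroup.mem_normalizer_closure_of_conj_mem {G : Type*} [Group G] {s : Set G} {g : G}
    (hsq : g ^ 2 ∈ closure s) (hconj : ∀ x ∈ s, g * x * g⁻¹ ∈ closure s) :
    g ∈ normalizer (closure s : Set G) := by
  have conj_mem : ∀ x ∈ closure s, g * x * g⁻¹ ∈ closure s := fun x hx =>
    (closure_le ((closure s).comap (MulAut.conj g).toMonoidHom)).2 hconj hx
  refine mem_normalizer_iff.2 fun x => ⟨conj_mem x, fun hx => ?_⟩
  have h := conj_mem _ hx
  rw [show x = (g ^ 2)⁻¹ * (g * (g * x * g⁻¹) * g⁻¹) * g ^ 2 by group]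
  exact mul_mem (mul_mem (inv_mem hsq) h) hsq

section Twists

variable {G : Type*} [Group G] {T : ℤ → G} {c : G}

def squareSubgroup (T : ℤ → G) : Subgroup G := closure {x | ∃ y, x = T y ^ 2}

theorem sq_mem_squareSubgroup (y : ℤ) : T y ^ 2 ∈ squareSubgroup T :=
  subset_closure ⟨y, rfl⟩

theorem conj_apply_add_two (h : ∀ x, T x * T (x + 1) = c) (y : ℤ) :
    c * T (y + 2) * c⁻¹ = T y := by
  rw [show y + 2 = y + 1 + 1 by ring, eq_inv_mul_of_mul_eq (h (y + 1)), ← h y]; group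

theorem conj_sq_mem_squareSubgroup_iff (h : ∀ x, T x * T (x + 1) = c) (a y : ℤ) :
    T (a + 1) * T (y + 2) ^ 2 * (T (a + 1))⁻¹ ∈ squareSubgroup T ↔
      T a * T y ^ 2 * (T a)⁻¹ ∈ squareSubgroup T := by
  have e : T (a + 1) * T (y + 2) ^ 2 * (T (a + 1))⁻¹
      = (T a ^ 2)⁻¹ * (T a * (c * T (y + 2) ^ 2 * c⁻¹) * (T a)⁻¹) * T a ^ 2 := by
    rw [eq_inv_mul_of_mul_eq (h a)]; group
  rw [e, ← conj_pow, conj_apply_add_two h,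
    Subgroup.mul_mem_cancel_right _ (sq_mem_squareSubgroup a),
    Subgroup.mul_mem_cancel_left _ (inv_mem (sq_mem_squareSubgroup a))]

theorem conj_sq_mem_squareSubgroup (h : ∀ x, T x * T (x + 1) = c) (a y : ℤ) :
    T a * T y ^ 2 * (T a)⁻¹ ∈ squareSubgroup T := by
  obtain ⟨n, rfl⟩ : ∃ n, y = a + n := ⟨y - a, by ring⟩
  induction n using Int.induction_on generalizing a with
  | zero =>
    rw [add_zero, ← conj_pow, mul_inv_cancel_right]
    exact sq_mem_squareSubgroup a
  | succ n ih =>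
    have := (conj_sq_mem_squareSubgroup_iff h (a - 1) (a - 1 + n)).2 (ih _)
    rwa [sub_add_cancel, show a - 1 + n + 2 = a + (n + 1) by ring] at this
  | pred n ih =>
    have := ih (a + 1)
    rwa [show a + 1 + -n = a + (-n - 1) + 2 by ring, conj_sq_mem_squareSubgroup_iff h] at this

theorem apply_mem_normalizer_squareSubgroup (h : ∀ x, T x * T (x + 1) = c) (a : ℤ) :
    T a ∈ normalizer (squareSubgroup T : Set G) :=
  mem_normalizer_closure_of_conj_mem (sq_mem_squareSubgroup a) fun _ ⟨y, hy⟩ =>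
    hy ▸ conj_sq_mem_squareSubgroup h a y

theorem exists_mem_eq_zpow_mul_of_mem_closure_range {S : Subgroup G}
    (hT : ∀ x, T x ∈ normalizer (S : Set G)) (hsq : ∀ x, T x ^ 2 ∈ S)
    (h : ∀ x, T x * T (x + 1) = c) (a₀ : ℤ) {g : G} (hg : g ∈ closure (Set.range T)) :
    ∃ m : ℤ, ∃ s ∈ S, g = c ^ m * s ∨ g = c ^ m * T a₀ * s := by
  set N := normalizer (S : Set G)
  have hc : c ∈ N := h 0 ▸ mul_mem (hT 0) (hT 1)
  let t : ℤ → N := fun a => ⟨T a, hT a⟩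
  -- `S` is normal in `N`; in `N ⧸ S` the images of the `T x` satisfy the dihedral relations.
  let π := QuotientGroup.mk' (S.subgroupOf N)
  obtain ⟨n, hn, rfl⟩ : g ∈ (closure (Set.range t)).map N.subtype := by
    rwa [MonoidHom.map_closure, ← Set.range_comp]
  have hπn : π n ∈ closure (Set.range (π ∘ t)) := by
    rw [Set.range_comp, ← MonoidHom.map_closure]
    exact mem_map_of_mem _ hn
  have ht (x : ℤ) : (π ∘ t) x ^ 2 = 1 := by
    rw [Function.comp_apply, ← map_pow, QuotientGroup.mk'_apply, QuotientGroup.eq_one_iff]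
    exact hsq x
  have hr (x : ℤ) : (π ∘ t) x * (π ∘ t) (x + 1) = π ⟨c, hc⟩ := by
    rw [Function.comp_apply, Function.comp_apply, ← map_mul]
    exact congrArg π (Subtype.ext (h x))
  obtain ⟨m, hm | hm⟩ := exists_eq_zpow_of_mem_closure_range ht hr a₀ hπn
  · rw [← map_zpow] at hm
    obtain ⟨s, hs, e⟩ := QuotientGroup.exists_mem_eq_mul_of_mk_eq hm.symm
    exact ⟨m, s, hs, .inl (by simpa using e)⟩
  · rw [← map_zpow, Function.comp_apply, ← map_mul] at hm
    obtain ⟨s, hs, e⟩ := QuotientGroup.exists_mem_eq_mul_of_mk_eq hm.symm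
    exact ⟨m, s, hs, .inr (by simpa [t] using e)⟩

end Twists

/-- Abstract form of the first assertion of Corollary 2.13 (normal form of elements of
the group `B` generated by the spherical twists): assuming the relation
`T a * T (a+1) = c` for all `a : ℤ`, every element of the subgroup generated by the
`T x` is of the form `c ^ m * s` or `c ^ m * T a₀ * s` with `s` in the subgroup
generated by the squares `T x ^ 2`. -/
theorem stmt_3 {G : Type*} [Group G] (T : ℤ → G) (c : G)
    (h : ∀ x : ℤ, T x * T (x + 1) = c) (a₀ : ℤ)
    (g : G) (hg : g ∈ Subgroup.closure (Set.range T)) :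
    ∃ (m : ℤ) (s : G), s ∈ Subgroup.closure { x : G | ∃ y : ℤ, x = T y ^ 2 } ∧
      (g = c ^ m * s ∨ g = c ^ m * T a₀ * s) :=
  exists_mem_eq_zpow_mul_of_mem_closure_range (apply_mem_normalizer_squareSubgroup h)
    sq_mem_squareSubgroup h a₀ hg
end
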